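/- Let Γ be a non-elementary hyperbolic group with finite generating set S and let (γ_n) be a sequence of distinct elements of Γ. Then there exists h ∈ Γ such that the sequence of translation lengths (l_S([γ_n, h]))_n is unbounded, where [γ,h] = γhγ⁻¹h⁻¹. -/

import Mathlib

/-!
Pass to a subsequence `a k` such that `a k` and `(a k)⁻¹` converge, along geodesic rays from `1`,
to points `ξ₊` and `ξ₋` of the Gromov boundary (the space of rays is compact since `Γ` is proper
and discrete). The stabilizers of `ξ₊` and `ξ₋` are proper subgroups: if the whole group fixed
the endpoint of a ray `r`, the Busemann cocycle `β h = lim (|h r i| - i)` would be a quasimorphism,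
bounded on the conjugates `vⁿ u v⁻ⁿ`, while only finitely many `h` have bounded `β`. Hence some
`h` fixes neither point, so `(h aₖ | aₖ)` and `(h aₖ⁻¹ | aₖ⁻¹)` stay bounded by some `K`. The
commutator `c = ⁅aₖ, h⁆` then satisfies `(c | c⁻¹) ≤ K + 2δ` and `|c| ≥ |aₖ| - K - |h|`, and the
powers of such an element grow linearly, giving translation length `≥ |c| - 2 (c | c⁻¹) - 2δ`.
-/

open Filter Topology
open scoped commutatorElement

section GromovProduct

variable {X : Type*} [MetricSpace X]

noncomputable def gromovProduct (w x y : X) : ℝ := (dist x w + dist y w - dist x y) / 2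

def GromovHyperbolic (δ : ℝ) (X : Type*) [MetricSpace X] : Prop :=
  ∀ w x y z : X, min (gromovProduct w x y) (gromovProduct w y z) - δ ≤ gromovProduct w x z

/-- The sequences `a` and `b` converge to the same point of the Gromov boundary. -/
def GromovEquiv (w : X) (a b : ℕ → X) : Prop :=
  Tendsto (fun p : ℕ × ℕ => gromovProduct w (a p.1) (b p.2)) atTop atTop

def IsGeodesicRay (w : X) (r : ℕ → X) : Prop :=
  r 0 = w ∧ ∀ i j : ℕ, dist (r i) (r j) = |(i : ℝ) - j|

lemma gromovProduct_comm (w x y : X) : gromovProduct w x y = gromovProduct w y x := by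
  simp only [gromovProduct, dist_comm x y, add_comm (dist x w)]

lemma gromovProduct_nonneg (w x y : X) : 0 ≤ gromovProduct w x y := by
  have := dist_triangle_right x y w
  unfold gromovProduct; linarith

lemma gromovProduct_le_dist_left (w x y : X) : gromovProduct w x y ≤ dist x w := by
  have := dist_triangle_left y w x
  unfold gromovProduct; linarith

lemma gromovProduct_self_left (x y : X) : gromovProduct x x y = 0 := by
  simp [gromovProduct, dist_comm]

lemma gromovProduct_le_add_dist (w x y z : X) :
    gromovProduct w x y ≤ gromovProduct w x z + dist y z := by
  have := dist_triangle y z w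
  have := dist_triangle x y z
  unfold gromovProduct; linarith

lemma gromovProduct_le_add_dist_base (w w' x y : X) :
    gromovProduct w x y ≤ gromovProduct w' x y + dist w w' := by
  have := dist_triangle x w' w
  have := dist_triangle y w' w
  unfold gromovProduct; linarith [dist_comm w w']

lemma dist_eq_sub_gromovProduct (w x y : X) :
    dist x y = dist x w + dist y w - 2 * gromovProduct w x y := by
  unfold gromovProduct; ring

lemma GromovEquiv.symm {w : X} {a b : ℕ → X} (h : GromovEquiv w a b) : GromovEquiv w b a := by
  refine tendsto_atTop.2 fun M => ?_
  obtain ⟨N, hN⟩ := eventually_atTop_prod_self.1 (tendsto_atTop.1 h M)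
  exact eventually_atTop_prod_self.2
    ⟨N, fun k l hk hl => (hN l k hl hk).trans_eq (gromovProduct_comm _ _ _)⟩

namespace IsGeodesicRay

variable {w : X} {r : ℕ → X}

lemma dist_base (hr : IsGeodesicRay w r) (i : ℕ) : dist (r i) w = i := by
  simp [← hr.1, hr.2]

lemma gromovProduct_eq_of_le (hr : IsGeodesicRay w r) {i j : ℕ} (hij : j ≤ i) :
    gromovProduct w (r i) (r j) = j := by
  have : (j : ℝ) ≤ i := by exact_mod_cast hij
  simp only [gromovProduct, hr.dist_base, hr.2, abs_of_nonneg (sub_nonneg.2 this)]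
  ring

end IsGeodesicRay

namespace GromovHyperbolic

variable {δ : ℝ} (hδ : GromovHyperbolic δ X)
include hδ

lemma nonneg [Nonempty X] : 0 ≤ δ := by
  obtain ⟨x⟩ := ‹Nonempty X›
  simpa [gromovProduct_self_left] using hδ x x x x

lemma min_min_sub_two_mul_le (w x y z t : X) :
    min (min (gromovProduct w x y) (gromovProduct w y z)) (gromovProduct w z t) - 2 * δ ≤
      gromovProduct w x t := by
  have : Nonempty X := ⟨w⟩
  have := hδ.nonneg
  have hxz := hδ w x y z
  have hxt := hδ w x z t
  have := min_le_left (min (gromovProduct w x y) (gromovProduct w y z)) (gromovProduct w z t)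
  have := min_le_right (min (gromovProduct w x y) (gromovProduct w y z)) (gromovProduct w z t)
  rcases min_cases (gromovProduct w x z) (gromovProduct w z t) with h | h <;> linarith

lemma gromovEquiv_trans {w : X} {a b c : ℕ → X} (hab : GromovEquiv w a b)
    (hbc : GromovEquiv w b c) : GromovEquiv w a c := by
  refine tendsto_atTop.2 fun M => ?_
  obtain ⟨N₁, hN₁⟩ := eventually_atTop_prod_self.1 (tendsto_atTop.1 hab (M + δ))
  obtain ⟨N₂, hN₂⟩ := eventually_atTop_prod_self.1 (tendsto_atTop.1 hbc (M + δ))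
  refine eventually_atTop_prod_self.2 ⟨max N₁ N₂, fun k m hk hm => ?_⟩
  have h₁ := hN₁ k (max N₁ N₂) (le_of_max_le_left hk) (le_max_left _ _)
  have h₂ := hN₂ (max N₁ N₂) m (le_max_right _ _) (le_of_max_le_right hm)
  have := hδ w (a k) (b (max N₁ N₂)) (c m)
  have := le_min h₁ h₂
  linarith

lemma gromovEquiv_of_isGeodesicRay {w : X} {r b : ℕ → X} (hr : IsGeodesicRay w r)
    (hrb : ∀ i, ∀ᶠ k in atTop, gromovProduct w (r i) (b k) = i) : GromovEquiv w r b := by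
  refine tendsto_atTop.2 fun M => ?_
  obtain ⟨N, hN⟩ := eventually_atTop.1 (hrb ⌈M + δ⌉₊)
  refine eventually_atTop_prod_self.2 ⟨max N ⌈M + δ⌉₊, fun i k hi hk => ?_⟩
  have hri := hr.gromovProduct_eq_of_le (le_of_max_le_right hi)
  have hrk := hN k (le_of_max_le_left hk)
  have := hδ w (r i) (r ⌈M + δ⌉₊) (b k)
  rw [hri, hrk, min_self] at this
  linarith [Nat.le_ceil (M + δ)]

lemma eventually_sub_le_gromovProduct {w : X} {a r : ℕ → X} (hr : IsGeodesicRay w r)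
    (har : GromovEquiv w a r) (j : ℕ) :
    ∀ᶠ L in atTop, (j : ℝ) - δ ≤ gromovProduct w (a L) (r j) := by
  obtain ⟨N, hN⟩ := eventually_atTop_prod_self.1 (tendsto_atTop.1 har j)
  filter_upwards [eventually_ge_atTop N] with L hL
  have hjN := hN L (max N j) hL (le_max_left N j)
  have := hδ w (a L) (r (max N j)) (r j)
  rw [hr.gromovProduct_eq_of_le (le_max_right N j), min_eq_right hjN] at this
  exact this

end GromovHyperbolic

lemma tendsto_dist_of_injective [ProperSpace X] [DiscreteTopology X] {γ : ℕ → X}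
    (hγ : Function.Injective γ) (w : X) : Tendsto (fun n => dist (γ n) w) atTop atTop :=
  (tendsto_dist_right_cocompact_atTop w).comp <| by
    rw [cocompact_eq_cofinite, ← Nat.cofinite_eq_atTop]
    exact hγ.tendsto_cofinite

lemma exists_isGeodesicRay_subseq [ProperSpace X] [DiscreteTopology X] {w : X}
    (hgeo : ∀ y : X, ∃ (n : ℕ) (p : ℕ → X), (n : ℝ) = dist w y ∧ p 0 = w ∧ p n = y ∧
      ∀ i ≤ n, ∀ j ≤ n, dist (p i) (p j) = |(i : ℝ) - (j : ℝ)|)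
    {b : ℕ → X} (hb : Tendsto (fun k => dist (b k) w) atTop atTop) :
    ∃ φ : ℕ → ℕ, StrictMono φ ∧ ∃ r : ℕ → X, IsGeodesicRay w r ∧
      ∀ i : ℕ, ∀ᶠ k in atTop, gromovProduct w (r i) (b (φ k)) = i := by
  choose n p hn hp0 hpn hp using fun k => hgeo (b k)
  have hdist : ∀ k, ∀ i ≤ n k, dist (p k i) w = i := fun k i hi => by
    simpa [hp0] using hp k i hi 0 (Nat.zero_le _)
  -- truncating the geodesics puts them all in one compact subset of `ℕ → X`
  have hmem : ∀ k,
      (fun i => p k (min i (n k))) ∈ Set.univ.pi fun i : ℕ => Metric.closedBall w (i : ℝ) :=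
    fun k => Set.mem_univ_pi.2 fun i => by
      rw [Metric.mem_closedBall, hdist k _ (min_le_right _ _)]
      exact_mod_cast min_le_left i (n k)
  obtain ⟨r, -, φ, hφ, hlim⟩ :=
    (isCompact_univ_pi fun i : ℕ => isCompact_closedBall w (i : ℝ)).tendsto_subseq hmem
  have hlong : ∀ i, ∀ᶠ k in atTop, i ≤ n (φ k) := fun i =>
    (hφ.tendsto_atTop.eventually (hb.eventually_ge_atTop i)).mono fun k hk => by
      rw [dist_comm, ← hn] at hk; exact_mod_cast hk
  have hev : ∀ i, ∀ᶠ k in atTop, i ≤ n (φ k) ∧ p (φ k) i = r i := fun i => by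
    have hconv := tendsto_pi_nhds.1 hlim i
    rw [nhds_discrete, tendsto_pure] at hconv
    filter_upwards [hlong i, hconv] with k hk hki
    exact ⟨hk, by simpa [min_eq_left hk] using hki⟩
  refine ⟨φ, hφ, r, ⟨?_, fun i j => ?_⟩, fun i => ?_⟩
  · obtain ⟨k, -, hk⟩ := (hev 0).exists
    rw [← hk, hp0]
  · obtain ⟨k, ⟨hik, hi⟩, hjk, hj⟩ := ((hev i).and (hev j)).exists
    rw [← hi, ← hj, hp _ _ hik _ hjk]
  · filter_upwards [hev i] with k ⟨hik, hi⟩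
    have hseg := hp (φ k) i hik (n (φ k)) le_rfl
    rw [hpn, abs_sub_comm, abs_of_nonneg (sub_nonneg.2 (by exact_mod_cast hik))] at hseg
    simp only [gromovProduct, ← hi, hdist _ _ hik, hseg, dist_comm (b _), ← hn]
    ring

end GromovProduct

section LeftInvariant

variable {Γ : Type*} [Group Γ] [MetricSpace Γ] [IsIsometricSMul Γ Γ]

lemma dist_eq_dist_inv_mul_one (x y : Γ) : dist x y = dist (y⁻¹ * x) 1 := by
  rw [← dist_mul_left y⁻¹ x y, inv_mul_cancel]

lemma dist_inv_one (x : Γ) : dist x⁻¹ 1 = dist x 1 := by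
  rw [← dist_mul_left x, mul_inv_cancel, mul_one, dist_comm]

lemma dist_mul_one_le (x y : Γ) : dist (x * y) 1 ≤ dist x 1 + dist y 1 := by
  calc dist (x * y) 1 ≤ dist (x * y) x + dist x 1 := dist_triangle _ _ _
    _ = dist x 1 + dist y 1 := by rw [add_comm, ← dist_mul_left x y 1, mul_one]

lemma dist_pow_one_le (x : Γ) (k : ℕ) : dist (x ^ k) 1 ≤ k * dist x 1 := by
  induction k with
  | zero => simp
  | succ k ih =>
    rw [pow_succ, Nat.cast_succ, add_one_mul]
    exact (dist_mul_one_le _ _).trans (by linarith)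

lemma dist_mul_one_eq (x y : Γ) :
    dist (x * y) 1 = dist x 1 + dist y 1 - 2 * gromovProduct 1 x⁻¹ y := by
  rw [← dist_inv_one x, ← dist_eq_sub_gromovProduct, ← dist_mul_left x x⁻¹ y, mul_inv_cancel,
    dist_comm]

lemma gromovProduct_mul_left (h x y : Γ) :
    gromovProduct 1 (h * x) (h * y) = gromovProduct h⁻¹ x y := by
  simp only [gromovProduct, dist_mul_left]
  rw [← dist_mul_left h x h⁻¹, ← dist_mul_left h y h⁻¹, mul_inv_cancel]

lemma abs_gromovProduct_mul_left_sub_le (h x y : Γ) :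
    |gromovProduct 1 (h * x) (h * y) - gromovProduct 1 x y| ≤ dist h 1 := by
  have h₁ := gromovProduct_le_add_dist_base h⁻¹ 1 x y
  have h₂ := gromovProduct_le_add_dist_base 1 h⁻¹ x y
  rw [dist_comm 1] at h₂
  rw [gromovProduct_mul_left, abs_le, ← dist_inv_one h]
  constructor <;> linarith

lemma gromovProduct_mul_self (x z : Γ) :
    gromovProduct 1 (x * z) x = dist x 1 - gromovProduct 1 x⁻¹ z := by
  have hxz : dist (x * z) x = dist z 1 := by rw [← dist_mul_left x z 1, mul_one]
  rw [gromovProduct, hxz, dist_mul_one_eq]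
  ring

lemma GromovEquiv.mul_left {a b : ℕ → Γ} (hab : GromovEquiv 1 a b) (h : Γ) :
    GromovEquiv 1 (fun k => h * a k) (fun k => h * b k) :=
  tendsto_atTop_mono (fun p => by
      linarith [(abs_le.1 (abs_gromovProduct_mul_left_sub_le h (a p.1) (b p.2))).1])
    (tendsto_atTop_add_const_right _ (-dist h 1) hab)

end LeftInvariant

section TranslationLength

variable {Γ : Type*} [Group Γ] [MetricSpace Γ]

noncomputable def translationLength (c : Γ) : ℝ := ⨅ g : Γ, dist g (c * g)

lemma le_translationLength {a : ℝ} {c : Γ} (h : ∀ g, a ≤ dist g (c * g)) :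
    a ≤ translationLength c :=
  le_ciInf h

lemma translationLength_nonneg (c : Γ) : 0 ≤ translationLength c :=
  le_translationLength fun _ => dist_nonneg

variable [IsIsometricSMul Γ Γ]

lemma dist_pow_one_le_mul_dist_add (c g : Γ) (k : ℕ) :
    dist (c ^ k) 1 ≤ k * dist g (c * g) + 2 * dist g 1 := by
  have hconj : c ^ k = g * (g⁻¹ * c * g) ^ k * g⁻¹ := by
    have := conj_pow (a := g⁻¹) (b := c) (i := k)
    rw [inv_inv] at this
    rw [this]
    group
  have hg : dist g (c * g) = dist (g⁻¹ * c * g) 1 := by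
    rw [dist_comm, dist_eq_dist_inv_mul_one, mul_assoc]
  rw [hconj, hg]
  have := dist_mul_one_le (g * (g⁻¹ * c * g) ^ k) g⁻¹
  have := dist_mul_one_le g ((g⁻¹ * c * g) ^ k)
  have := dist_pow_one_le (g⁻¹ * c * g) k
  rw [dist_inv_one] at *
  linarith

namespace GromovHyperbolic

variable {δ : ℝ} (hδ : GromovHyperbolic δ Γ)
include hδ

lemma gromovProduct_pow_inv_le {c : Γ} {K : ℝ} (hK : gromovProduct 1 c c⁻¹ ≤ K)
    (hc : 2 * K + 2 * δ < dist c 1) (k : ℕ) : gromovProduct 1 (c ^ k)⁻¹ c ≤ K + δ := by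
  induction k with
  | zero =>
    simp only [pow_zero, inv_one, gromovProduct_self_left]
    linarith [gromovProduct_nonneg 1 c c⁻¹, hδ.nonneg]
  | succ k ih =>
    by_contra! hlt
    have hd : dist c⁻¹ (c ^ (k + 1))⁻¹ = dist (c ^ k) 1 := by
      rw [dist_eq_dist_inv_mul_one, inv_inv, pow_succ, mul_inv_cancel_right]
    have hA : gromovProduct 1 c⁻¹ (c ^ (k + 1))⁻¹ = dist c 1 - gromovProduct 1 (c ^ k)⁻¹ c := by
      rw [gromovProduct, hd, dist_inv_one, dist_inv_one, pow_succ, dist_mul_one_eq]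
      ring
    have := hδ 1 c⁻¹ (c ^ (k + 1))⁻¹ c
    have := lt_min (show K + δ < gromovProduct 1 c⁻¹ (c ^ (k + 1))⁻¹ by linarith) hlt
    linarith [gromovProduct_comm 1 c⁻¹ c]

lemma mul_le_dist_pow_one {c : Γ} {K : ℝ} (hK : gromovProduct 1 c c⁻¹ ≤ K)
    (hc : 2 * K + 2 * δ < dist c 1) (k : ℕ) :
    k * (dist c 1 - 2 * K - 2 * δ) ≤ dist (c ^ k) 1 := by
  induction k with
  | zero => simp
  | succ k ih =>
    rw [pow_succ, dist_mul_one_eq, Nat.cast_succ]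
    linarith [hδ.gromovProduct_pow_inv_le hK hc k]

lemma sub_le_translationLength {c : Γ} {K : ℝ} (hK : gromovProduct 1 c c⁻¹ ≤ K) :
    dist c 1 - 2 * K - 2 * δ ≤ translationLength c := by
  rcases le_or_gt (dist c 1) (2 * K + 2 * δ) with hc | hc
  · linarith [translationLength_nonneg c]
  refine le_translationLength fun g => ?_
  by_contra! hlt
  obtain ⟨k, hk⟩ := exists_nat_gt (2 * dist g 1 / (dist c 1 - 2 * K - 2 * δ - dist g (c * g)))
  rw [div_lt_iff₀ (by linarith)] at hk
  linarith [hδ.mul_le_dist_pow_one hK hc k, dist_pow_one_le_mul_dist_add c g k]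

end GromovHyperbolic

end TranslationLength

section Commutator

variable {Γ : Type*} [Group Γ] [MetricSpace Γ] [IsIsometricSMul Γ Γ]

lemma gromovProduct_conj_self (x g : Γ) :
    gromovProduct 1 (x * g * x⁻¹) x = dist x 1 - gromovProduct 1 (g * x⁻¹) x⁻¹ := by
  rw [mul_assoc, gromovProduct_mul_self, gromovProduct_comm]

lemma sub_le_gromovProduct_commutator (x h : Γ) :
    dist x 1 - gromovProduct 1 (h * x⁻¹) x⁻¹ - dist h 1 ≤ gromovProduct 1 ⁅x, h⁆ x := by
  have := gromovProduct_le_add_dist 1 x (x * h * x⁻¹) ⁅x, h⁆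
  have hd : dist (x * h * x⁻¹) ⁅x, h⁆ = dist h 1 := by
    have := dist_mul_left (x * h * x⁻¹) 1 h⁻¹
    rw [mul_one] at this
    rw [commutatorElement_def, this, dist_comm, dist_inv_one]
  rw [gromovProduct_comm 1 x, gromovProduct_comm 1 x, gromovProduct_conj_self, hd] at this
  linarith

lemma sub_le_gromovProduct_commutator_inv (x h : Γ) :
    dist x 1 - gromovProduct 1 (h * x⁻¹) x⁻¹ - 2 * dist h 1 ≤
      gromovProduct 1 ⁅x, h⁆⁻¹ (h * x) := by
  have hshift := abs_le.1 (abs_gromovProduct_mul_left_sub_le h (x * h⁻¹ * x⁻¹) x)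
  have hinv := abs_le.1 (abs_gromovProduct_mul_left_sub_le h (h⁻¹ * x⁻¹) x⁻¹)
  rw [mul_inv_cancel_left, gromovProduct_comm 1 x⁻¹] at hinv
  have e : h * (x * h⁻¹ * x⁻¹) = ⁅x, h⁆⁻¹ := by rw [commutatorElement_def]; group
  rw [gromovProduct_conj_self, e] at hshift
  linarith

namespace GromovHyperbolic

variable {δ : ℝ} (hδ : GromovHyperbolic δ Γ)
include hδ

lemma gromovProduct_commutator_inv_le {x h : Γ} {K : ℝ}
    (h₁ : gromovProduct 1 (h * x) x ≤ K) (h₂ : gromovProduct 1 (h * x⁻¹) x⁻¹ ≤ K)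
    (hx : 2 * K + 2 * dist h 1 + 2 * δ < dist x 1) :
    gromovProduct 1 ⁅x, h⁆ ⁅x, h⁆⁻¹ ≤ K + 2 * δ := by
  have hc := sub_le_gromovProduct_commutator x h
  have hc' := sub_le_gromovProduct_commutator_inv x h
  have := dist_nonneg (x := h) (y := 1)
  by_contra! hlt
  have hxc : K + 2 * δ < gromovProduct 1 x ⁅x, h⁆ := by rw [gromovProduct_comm]; linarith
  have hcx : K + 2 * δ < gromovProduct 1 ⁅x, h⁆⁻¹ (h * x) := by linarith
  have := hδ.min_min_sub_two_mul_le 1 x ⁅x, h⁆ ⁅x, h⁆⁻¹ (h * x)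
  have := lt_min (lt_min hxc hlt) hcx
  linarith [gromovProduct_comm 1 x (h * x)]

lemma sub_le_translationLength_commutator {x h : Γ} {K : ℝ}
    (h₁ : gromovProduct 1 (h * x) x ≤ K) (h₂ : gromovProduct 1 (h * x⁻¹) x⁻¹ ≤ K) :
    dist x 1 - 3 * K - 2 * dist h 1 - 6 * δ ≤ translationLength ⁅x, h⁆ := by
  have := hδ.nonneg (X := Γ)
  have := dist_nonneg (x := h) (y := 1)
  rcases le_or_gt (dist x 1) (2 * K + 2 * dist h 1 + 2 * δ) with hx | hx
  · linarith [translationLength_nonneg ⁅x, h⁆, gromovProduct_nonneg 1 (h * x) x]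
  linarith [hδ.sub_le_translationLength (hδ.gromovProduct_commutator_inv_le h₁ h₂ hx),
    gromovProduct_le_dist_left 1 ⁅x, h⁆ x, sub_le_gromovProduct_commutator x h]

lemma tendsto_translationLength_commutator {a : ℕ → Γ}
    (ha : Tendsto (fun k => dist (a k) 1) atTop atTop) {h : Γ} {K : ℝ}
    (h₁ : ∀ᶠ k in atTop, gromovProduct 1 (h * a k) (a k) ≤ K)
    (h₂ : ∀ᶠ k in atTop, gromovProduct 1 (h * (a k)⁻¹) (a k)⁻¹ ≤ K) :
    Tendsto (fun k => translationLength ⁅a k, h⁆) atTop atTop :=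
  tendsto_atTop_mono' _
    ((h₁.and h₂).mono fun k hk => by linarith [hδ.sub_le_translationLength_commutator hk.1 hk.2])
    (tendsto_atTop_add_const_right _ (-(3 * K + 2 * dist h 1 + 6 * δ)) ha)

end GromovHyperbolic

end Commutator

section Stabilizer

variable {Γ : Type*} [Group Γ] [MetricSpace Γ] [IsIsometricSMul Γ Γ]
  {δ : ℝ} (hδ : GromovHyperbolic δ Γ)

def boundaryStabilizer {b : ℕ → Γ} (hb : GromovEquiv 1 b b) : Subgroup Γ where
  carrier := {h | GromovEquiv 1 (fun k => h * b k) b}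
  one_mem' := by
    change GromovEquiv 1 (fun k => 1 * b k) b
    simpa only [one_mul] using hb
  mul_mem' {g h} hg hh := by
    change GromovEquiv 1 (fun k => g * b k) b at hg
    change GromovEquiv 1 (fun k => h * b k) b at hh
    change GromovEquiv 1 (fun k => g * h * b k) b
    simpa only [mul_assoc] using hδ.gromovEquiv_trans (hh.mul_left g) hg
  inv_mem' {h} hh := by
    change GromovEquiv 1 (fun k => h * b k) b at hh
    change GromovEquiv 1 (fun k => h⁻¹ * b k) b
    simpa only [inv_mul_cancel_left] using (hh.mul_left h⁻¹).symm

lemma mem_boundaryStabilizer {b : ℕ → Γ} {hb : GromovEquiv 1 b b} {h : Γ} :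
    h ∈ boundaryStabilizer hδ hb ↔ GromovEquiv 1 (fun k => h * b k) b :=
  Iff.rfl

lemma GromovHyperbolic.exists_eventually_gromovProduct_le {b : ℕ → Γ} (hb : GromovEquiv 1 b b)
    {h : Γ} (hh : h ∉ boundaryStabilizer hδ hb) :
    ∃ K, ∀ᶠ k in atTop, gromovProduct 1 (h * b k) (b k) ≤ K := by
  rw [mem_boundaryStabilizer] at hh
  contrapose! hh
  refine tendsto_atTop.2 fun M => ?_
  obtain ⟨N, hN⟩ :=
    eventually_atTop_prod_self.1 (tendsto_atTop.1 hb (M + 2 * δ + dist h 1))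
  obtain ⟨n, hn, hnM⟩ := frequently_atTop.1 (hh (M + 2 * δ)) N
  refine eventually_atTop_prod_self.2 ⟨N, fun k l hk hl => ?_⟩
  have hkn := abs_le.1 (abs_gromovProduct_mul_left_sub_le h (b k) (b n))
  have := hN k n hk hn
  have := hN n l hn hl
  have := dist_nonneg (x := h) (y := 1)
  have hhk : M + 2 * δ ≤ gromovProduct 1 (h * b k) (h * b n) := by linarith
  have hnl : M + 2 * δ ≤ gromovProduct 1 (b n) (b l) := by linarith
  have := hδ.min_min_sub_two_mul_le 1 (h * b k) (h * b n) (b n) (b l)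
  have := le_min (le_min hhk hnM.le) hnl
  show M ≤ gromovProduct 1 (h * b k) (b l)
  linarith

end Stabilizer

lemma Subgroup.exists_notMem_notMem_of_ne_top {G : Type*} [Group G] {H K : Subgroup G}
    (hH : H ≠ ⊤) (hK : K ≠ ⊤) : ∃ g, g ∉ H ∧ g ∉ K := by
  by_contra! hcover
  exact (SubgroupClass.subset_union.1 fun g _ => or_iff_not_imp_left.2 (hcover g)).elim
    (hH ∘ top_le_iff.1) (hK ∘ top_le_iff.1)

lemma abs_conj_sub_le_of_quasimorphism {G : Type*} [Group G] {f : G → ℝ} {D : ℝ}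
    (hf : ∀ g h, |f (g * h) - f g - f h| ≤ D) (w t : G) : |f (w * t * w⁻¹) - f t| ≤ 4 * D := by
  have h₁ := abs_le.1 (hf (w * t) w⁻¹)
  have h₂ := abs_le.1 (hf w t)
  have h₃ := abs_le.1 (hf w w⁻¹)
  have h₄ := abs_le.1 (hf 1 1)
  rw [mul_inv_cancel] at h₃
  rw [one_mul] at h₄
  rw [abs_le]
  constructor <;> linarith

lemma injective_pow_mul_mul_pow_inv {G : Type*} [Group G] {u v : G}
    (huv : Function.Injective (FreeGroup.lift fun c : Bool => if c then u else v)) :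
    Function.Injective fun n : ℕ => v ^ n * u * (v ^ n)⁻¹ := by
  let w : ℕ → FreeGroup Bool := fun n =>
    FreeGroup.of false ^ n * FreeGroup.of true * (FreeGroup.of false ^ n)⁻¹
  have hψ : ∀ n : ℕ, FreeGroup.lift (fun c : Bool => if c then Equiv.swap (0 : ℤ) 1 else
      Equiv.addRight 1) (w n) = Equiv.swap (n : ℤ) (n + 1) := fun n => by
    ext z
    simp only [w, map_mul, map_inv, map_pow, FreeGroup.lift_apply_of, Bool.false_eq_true,
      ↓reduceIte, Equiv.nsmul_addRight, Int.nsmul_eq_mul, mul_one, Equiv.neg_addRight,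
      Equiv.Perm.coe_mul, Equiv.coe_addRight, Function.comp_apply, Equiv.swap_apply_def]
    split_ifs <;> omega
  intro m n hmn
  have hw : w m = w n := huv (by simpa [w] using hmn)
  have := congrArg (fun σ : Equiv.Perm ℤ => σ m) ((hψ m).symm.trans ((congrArg _ hw).trans (hψ n)))
  simp only [Equiv.swap_apply_left] at this
  rw [Equiv.swap_apply_def] at this
  split_ifs at this <;> omega

section Busemann

variable {Γ : Type*} [Group Γ] [MetricSpace Γ] [IsIsometricSMul Γ Γ] {r : ℕ → Γ}

namespace IsGeodesicRay

lemma sub_le_dist_mul (hr : IsGeodesicRay 1 r) (h : Γ) (i : ℕ) :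
    (i : ℝ) - dist h 1 ≤ dist (h * r i) 1 := by
  have := dist_mul_one_le h⁻¹ (h * r i)
  rw [inv_mul_cancel_left, hr.dist_base, dist_inv_one] at this
  linarith

lemma dist_mul_sub_antitone (hr : IsGeodesicRay 1 r) (h : Γ) {i j : ℕ} (hij : i ≤ j) :
    dist (h * r j) 1 - j ≤ dist (h * r i) 1 - i := by
  have := dist_triangle (h * r j) (h * r i) 1
  rw [dist_mul_left, hr.2, abs_of_nonneg (sub_nonneg.2 (by exact_mod_cast hij))] at this
  linarith

lemma exists_busemann (hr : IsGeodesicRay 1 r) (hnat : ∀ x : Γ, ∃ n : ℕ, dist x 1 = n)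
    (h : Γ) : ∃ (I : ℕ) (β : ℝ), ∀ i, I ≤ i → dist (h * r i) 1 = i + β := by
  -- `dist (h * r i) 1 - i` is antitone, bounded below and integer valued
  have hint : ∀ i, ∃ z : ℤ, (z : ℝ) = dist (h * r i) 1 - i := fun i => by
    obtain ⟨n, hn⟩ := hnat (h * r i)
    exact ⟨n - i, by push_cast; rw [hn]⟩
  obtain ⟨z, ⟨I, hI⟩, hmin⟩ :=
    Int.exists_least_of_bdd (P := fun z : ℤ => ∃ i, (z : ℝ) = dist (h * r i) 1 - i)
      ⟨-⌈dist h 1⌉, fun z ⟨i, hi⟩ => by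
        have := Int.le_ceil (dist h 1)
        have := hr.sub_le_dist_mul h i
        exact_mod_cast (show ((-⌈dist h 1⌉ : ℤ) : ℝ) ≤ z by push_cast; linarith)⟩
      ((hint 0).imp fun z hz => ⟨0, hz⟩)
  refine ⟨I, z, fun i hi => ?_⟩
  obtain ⟨y, hy⟩ := hint i
  have : (z : ℝ) ≤ y := by exact_mod_cast hmin y ⟨i, hy⟩
  linarith [hr.dist_mul_sub_antitone h hi]

end IsGeodesicRay

namespace GromovHyperbolic

variable {δ : ℝ} (hδ : GromovHyperbolic δ Γ) (hr : IsGeodesicRay 1 r)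
  (hnat : ∀ x : Γ, ∃ n : ℕ, dist x 1 = n)
include hδ hr

lemma dist_mul_le_of_busemann {h : Γ} (hh : GromovEquiv 1 (fun i => h * r i) r) {I : ℕ} {β : ℝ}
    (hβ : ∀ i, I ≤ i → dist (h * r i) 1 = i + β) {i m : ℕ} (hi : I ≤ i)
    (hm : dist (h * r i) 1 = m) : dist (h * r i) (r m) ≤ 4 * δ := by
  obtain ⟨L, hiL, hL⟩ :=
    ((eventually_ge_atTop i).and (hδ.eventually_sub_le_gromovProduct hr hh m)).exists
  have hiL' : (i : ℝ) ≤ L := by exact_mod_cast hiL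
  have hgp : gromovProduct 1 (h * r i) (h * r L) = m := by
    rw [gromovProduct, dist_mul_left, hr.2, hβ i hi, hβ L (hi.trans hiL), ← hm, hβ i hi,
      abs_of_nonpos (by linarith)]
    ring
  have hyp := hδ 1 (h * r i) (h * r L) (r m)
  rw [hgp] at hyp
  have := le_min (show (m : ℝ) - δ ≤ m by linarith [hδ.nonneg (X := Γ)]) hL
  rw [dist_eq_sub_gromovProduct 1, hm, hr.dist_base]
  linarith

include hnat

lemma abs_busemann_mul_sub_le (hfix : ∀ h, GromovEquiv 1 (fun i => h * r i) r) {I : Γ → ℕ}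
    {β : Γ → ℝ} (hβ : ∀ h i, I h ≤ i → dist (h * r i) 1 = i + β h) (g h : Γ) :
    |β (g * h) - β g - β h| ≤ 12 * δ := by
  set i := max (I (g * h)) (max (I h) (I g + ⌈dist h 1⌉₊))
  have hi₁ : I (g * h) ≤ i := le_max_left _ _
  have hi₂ : I h ≤ i := (le_max_left _ _).trans (le_max_right _ _)
  have hi₃ : I g + ⌈dist h 1⌉₊ ≤ i := (le_max_right _ _).trans (le_max_right _ _)
  obtain ⟨m₁, hm₁⟩ := hnat (h * r i)
  obtain ⟨m₂, hm₂⟩ := hnat (g * r m₁)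
  obtain ⟨m₃, hm₃⟩ := hnat (g * h * r i)
  have hm₁I : I g ≤ m₁ := by
    have : ((I g + ⌈dist h 1⌉₊ : ℕ) : ℝ) ≤ i := by exact_mod_cast hi₃
    have := hr.sub_le_dist_mul h i
    have := Nat.le_ceil (dist h 1)
    exact_mod_cast (show (I g : ℝ) ≤ m₁ by push_cast at *; linarith)
  have d₁ := hδ.dist_mul_le_of_busemann hr (hfix _) (hβ _) hi₁ hm₃
  have d₂ := hδ.dist_mul_le_of_busemann hr (hfix _) (hβ _) hi₂ hm₁
  have d₃ := hδ.dist_mul_le_of_busemann hr (hfix _) (hβ _) hm₁I hm₂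
  rw [← dist_mul_left g, ← mul_assoc] at d₂
  have := dist_triangle4 (r m₃) (g * h * r i) (g * r m₁) (r m₂)
  rw [hr.2, dist_comm (r m₃)] at this
  rw [← hm₂, hβ g m₁ hm₁I, ← hm₃, hβ (g * h) i hi₁, ← hm₁, hβ h i hi₂] at this
  rw [show β (g * h) - β g - β h = i + β (g * h) - (i + β h + β g) by ring]
  linarith

lemma finite_setOf_abs_busemann_le [ProperSpace Γ] [DiscreteTopology Γ]
    (hfix : ∀ h, GromovEquiv 1 (fun i => h * r i) r) {I : Γ → ℕ} {β : Γ → ℝ}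
    (hβ : ∀ h i, I h ≤ i → dist (h * r i) 1 = i + β h) (C : ℝ) :
    {h : Γ | |β h| ≤ C}.Finite := by
  by_contra hinf
  have hB := (isCompact_closedBall (1 : Γ) (4 * δ + C)).finite_of_discrete
  obtain ⟨S, hS, hcard⟩ := Set.Infinite.exists_subset_card_eq hinf (hB.toFinset.card + 1)
  set i := S.sup I
  -- conjugating by `r i` moves all of `S` into a fixed ball
  have hmaps : Set.MapsTo (fun h => (r i)⁻¹ * h * r i) S hB.toFinset := fun h hh => by
    obtain ⟨m, hm⟩ := hnat (h * r i)
    have hi : I h ≤ i := Finset.le_sup hh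
    have := hδ.dist_mul_le_of_busemann hr (hfix h) (hβ h) hi hm
    have := dist_triangle (h * r i) (r m) (r i)
    rw [hr.2, ← hm, hβ h i hi, add_sub_cancel_left] at this
    simp only [Set.Finite.coe_toFinset, Metric.mem_closedBall]
    rw [mul_assoc, ← dist_eq_dist_inv_mul_one]
    linarith [show |β h| ≤ C from hS hh]
  have := Finset.card_le_card_of_injOn _ hmaps fun x _ y _ hxy => by simpa using hxy
  omega

lemma exists_not_gromovEquiv_mul_left [ProperSpace Γ] [DiscreteTopology Γ] {u v : Γ}
    (huv : Function.Injective (FreeGroup.lift fun c : Bool => if c then u else v)) :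
    ∃ h : Γ, ¬ GromovEquiv 1 (fun i => h * r i) r := by
  by_contra! hfix
  choose I β hβ using hr.exists_busemann hnat
  have hconj : ∀ n : ℕ, |β (v ^ n * u * (v ^ n)⁻¹)| ≤ |β u| + 4 * (12 * δ) := fun n => by
    have := abs_conj_sub_le_of_quasimorphism (hδ.abs_busemann_mul_sub_le hr hnat hfix hβ) (v ^ n) u
    linarith [abs_sub_abs_le_abs_sub (β (v ^ n * u * (v ^ n)⁻¹)) (β u)]
  exact Set.infinite_range_of_injective (injective_pow_mul_mul_pow_inv huv)
    ((hδ.finite_setOf_abs_busemann_le hr hnat hfix hβ _).subset (Set.range_subset_iff.2 hconj))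

end GromovHyperbolic

end Busemann

section Main

variable {Γ : Type*} [Group Γ] [MetricSpace Γ] [IsIsometricSMul Γ Γ] [ProperSpace Γ]
  [DiscreteTopology Γ] {δ : ℝ} (hδ : GromovHyperbolic δ Γ)
include hδ

lemma GromovHyperbolic.exists_subseq_gromovEquiv_isGeodesicRay
    (hgeo : ∀ y : Γ, ∃ (n : ℕ) (p : ℕ → Γ), (n : ℝ) = dist 1 y ∧ p 0 = 1 ∧ p n = y ∧
      ∀ i ≤ n, ∀ j ≤ n, dist (p i) (p j) = |(i : ℝ) - (j : ℝ)|)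
    {γ : ℕ → Γ} (hγ : Function.Injective γ) :
    ∃ φ : ℕ → ℕ, StrictMono φ ∧ ∃ r₁ r₂ : ℕ → Γ, IsGeodesicRay 1 r₁ ∧ IsGeodesicRay 1 r₂ ∧
      GromovEquiv 1 r₁ (fun k => γ (φ k)) ∧ GromovEquiv 1 r₂ (fun k => (γ (φ k))⁻¹) := by
  have hesc := tendsto_dist_of_injective hγ 1
  obtain ⟨φ₁, hφ₁, r₁, hr₁, h₁⟩ := exists_isGeodesicRay_subseq hgeo hesc
  obtain ⟨φ₂, hφ₂, r₂, hr₂, h₂⟩ := exists_isGeodesicRay_subseq hgeo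
    (b := fun k => (γ (φ₁ k))⁻¹)
    (by simpa only [dist_inv_one, Function.comp_def] using hesc.comp hφ₁.tendsto_atTop)
  exact ⟨φ₁ ∘ φ₂, hφ₁.comp hφ₂, r₁, r₂, hr₁, hr₂,
    hδ.gromovEquiv_of_isGeodesicRay hr₁ fun i => hφ₂.tendsto_atTop.eventually (h₁ i),
    hδ.gromovEquiv_of_isGeodesicRay hr₂ h₂⟩

lemma GromovHyperbolic.boundaryStabilizer_ne_top (hnat : ∀ x : Γ, ∃ n : ℕ, dist x 1 = n)
    {u v : Γ} (huv : Function.Injective (FreeGroup.lift fun c : Bool => if c then u else v))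
    {r b : ℕ → Γ} (hr : IsGeodesicRay 1 r) (hrb : GromovEquiv 1 r b) (hb : GromovEquiv 1 b b) :
    boundaryStabilizer hδ hb ≠ ⊤ := by
  intro htop
  obtain ⟨h, hh⟩ := hδ.exists_not_gromovEquiv_mul_left hr hnat huv
  have hhb : GromovEquiv 1 (fun k => h * b k) b :=
    (mem_boundaryStabilizer hδ).1 (htop ▸ Subgroup.mem_top h)
  exact hh (hδ.gromovEquiv_trans (hδ.gromovEquiv_trans (hrb.mul_left h) hhb) hrb.symm)

end Main

theorem commutator_translation_lengths_unbounded_general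
    {Γ : Type*} [Group Γ] [MetricSpace Γ] [ProperSpace Γ]
    (hinv : ∀ g x y : Γ, dist (g * x) (g * y) = dist x y)
    (hdisc : ∀ x y : Γ, x ≠ y → 1 ≤ dist x y)
    (δS : ℝ)
    (hhyp : ∀ w x y z : Γ,
      min ((dist x w + dist y w - dist x y) / 2) ((dist y w + dist z w - dist y z) / 2) - δS ≤
        (dist x w + dist z w - dist x z) / 2)
    (hgeo : ∀ x y : Γ, ∃ (n : ℕ) (p : ℕ → Γ), (n : ℝ) = dist x y ∧ p 0 = x ∧ p n = y ∧
      ∀ i ≤ n, ∀ j ≤ n, dist (p i) (p j) = |(i : ℝ) - (j : ℝ)|)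
    (hnonelem : ∃ u v : Γ, ∀ w : FreeGroup Bool, w ≠ 1 →
      FreeGroup.lift (fun c => if c then u else v) w ≠ 1)
    (γseq : ℕ → Γ) (hdistinct : Function.Injective γseq) :
    ∃ h : Γ, ∀ M : ℝ, ∃ n : ℕ,
      M ≤ ⨅ g : Γ, dist g ((γseq n * h * (γseq n)⁻¹ * h⁻¹) * g) := by
  have : IsIsometricSMul Γ Γ := ⟨fun g => Isometry.of_dist_eq (hinv g)⟩
  have : DiscreteTopology Γ := DiscreteTopology.of_forall_le_dist one_pos hdisc
  have hδ : GromovHyperbolic δS Γ := hhyp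
  have hnat : ∀ x : Γ, ∃ n : ℕ, dist x 1 = n := fun x => by
    obtain ⟨n, -, hn, -⟩ := hgeo x 1
    exact ⟨n, hn.symm⟩
  obtain ⟨u, v, huv⟩ := hnonelem
  replace huv := (injective_iff_map_eq_one _).2 fun w => not_imp_not.1 (huv w)
  obtain ⟨φ, hφ, r₁, r₂, hr₁, hr₂, ha₁, ha₂⟩ :=
    hδ.exists_subseq_gromovEquiv_isGeodesicRay (hgeo 1) hdistinct
  have hconv₁ := hδ.gromovEquiv_trans ha₁.symm ha₁
  have hconv₂ := hδ.gromovEquiv_trans ha₂.symm ha₂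
  obtain ⟨h, hh₁, hh₂⟩ := Subgroup.exists_notMem_notMem_of_ne_top
    (hδ.boundaryStabilizer_ne_top hnat huv hr₁ ha₁ hconv₁)
    (hδ.boundaryStabilizer_ne_top hnat huv hr₂ ha₂ hconv₂)
  obtain ⟨K₁, hK₁⟩ := hδ.exists_eventually_gromovProduct_le hconv₁ hh₁
  obtain ⟨K₂, hK₂⟩ := hδ.exists_eventually_gromovProduct_le hconv₂ hh₂
  have htend := hδ.tendsto_translationLength_commutator
    (tendsto_dist_of_injective (hdistinct.comp hφ.injective) 1)
    (hK₁.mono fun _ hk => le_max_of_le_left hk) (hK₂.mono fun _ hk => le_max_of_le_right hk)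
  refine ⟨h, fun M => ?_⟩
  obtain ⟨k, hk⟩ := (htend.eventually_ge_atTop M).exists
  exact ⟨φ k, hk⟩

/-- If `Γ` is a non-elementary hyperbolic group and `(γ n)` is a
sequence of distinct elements of `Γ`, then there is `h ∈ Γ` such that the translation
lengths `l_S([γ n, h])` of the commutators are unbounded. -/
theorem commutator_translation_lengths_unbounded
    {Γ : Type*} [Group Γ] [MetricSpace Γ] [ProperSpace Γ]
    (hinv : ∀ g x y : Γ, dist (g * x) (g * y) = dist x y)
    (hdisc : ∀ x y : Γ, x ≠ y → 1 ≤ dist x y)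
    (δS : ℝ) (hδS : 0 ≤ δS)
    (hhyp : ∀ w x y z : Γ,
      min ((dist x w + dist y w - dist x y) / 2) ((dist y w + dist z w - dist y z) / 2) - δS ≤
        (dist x w + dist z w - dist x z) / 2)
    (hgeo : ∀ x y : Γ, ∃ (n : ℕ) (p : ℕ → Γ), (n : ℝ) = dist x y ∧ p 0 = x ∧ p n = y ∧
      ∀ i ≤ n, ∀ j ≤ n, dist (p i) (p j) = |(i : ℝ) - (j : ℝ)|)
    (hnonelem : ∃ u v : Γ, ∀ w : FreeGroup Bool, w ≠ 1 →
      FreeGroup.lift (fun c => if c then u else v) w ≠ 1)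
    (γseq : ℕ → Γ) (hdistinct : Function.Injective γseq) :
    ∃ h : Γ, ∀ M : ℝ, ∃ n : ℕ,
      M ≤ ⨅ g : Γ, dist g ((γseq n * h * (γseq n)⁻¹ * h⁻¹) * g) :=
  commutator_translation_lengths_unbounded_general hinv hdisc δS hhyp hgeo hnonelem γseq hdistinct
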